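/- No quantum strategy (even irreversible, i.e., using arbitrary quantum channels) wins the 32-Game with probability exceeding 5/6; combined with the explicit unitary strategy achieving 5/6, the optimal quantum win rate of the 32-Game is exactly 5/6. -/

import Mathlib

open Matrix

/-- Apply a quantum channel given by Kraus operators K to a state ρ. -/
noncomputable def applyKraus {n : ℕ} (K : Fin n → Matrix (Fin 2) (Fin 2) ℂ)
    (ρ : Matrix (Fin 2) (Fin 2) ℂ) : Matrix (Fin 2) (Fin 2) ℂ :=
  ∑ i, K i * ρ * (K i)ᴴ

/-- The initial state |0⟩⟨0|. -/
def rho0 : Matrix (Fin 2) (Fin 2) ℂ := !![1, 0; 0, 0]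

/-- The winning probability of the 32-Game for quantum-channel strategies of
Alice and Bob: the qubit starts in |0⟩⟨0|, Alice applies channel A_a, Bob applies
channel B_b, and the computational-basis measurement must yield δ_{ab};
inputs a,b are uniform on {0,1,2}. -/
noncomputable def winProb32 {n m : ℕ}
    (KA : Fin 3 → Fin n → Matrix (Fin 2) (Fin 2) ℂ)
    (KB : Fin 3 → Fin m → Matrix (Fin 2) (Fin 2) ℂ) : ℝ :=
  (∑ a : Fin 3, ∑ b : Fin 3,
      (if a = b then (applyKraus (KB b) (applyKraus (KA a) rho0)) 1 1
       else (applyKraus (KB b) (applyKraus (KA a) rho0)) 0 0).re) / 9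

/-! Write a qubit matrix `M` as `(tr M • 1 + b • σ) / 2` with Bloch vector `b = blochVector M`.
Then `Re tr (A B) = (tr A tr B + ⟪b_A, b_B⟫) / 2` for Hermitian `A, B`, and positivity of `M`
gives `‖b_M‖ ≤ tr M`. Alice's states `ρ_a` have Bloch vectors `v_a` in the unit ball; Bob's
outcome-`1` effect `E_b` (the Heisenberg-picture image of `|1⟩⟨1|`) has trace `t` and Bloch
vector `u` with `‖u‖ ≤ t` and `‖u‖ ≤ 2 - t`, because `E_b` and `1 - E_b` are positive.
For Bob's input `b` the score summed over Alice's inputs is `2 + (-t + ⟪u, 2 v_b - Σ v⟫) / 2`,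
at most `2 + ‖2 v_b - Σ v‖² / 8` (a Helstrom-type bound), and
`Σ_b ‖2 v_b - Σ v‖² = 4 Σ_b ‖v_b‖² - ‖Σ v‖² ≤ 12`, so the win rate is at most `(6 + 3/2) / 9 = 5/6`.

Equality holds when Alice rotates `|0⟩` by `0, π/3, 2π/3` (Bloch vectors at `120°`) and Bob
rotates so that Alice's state for `a = b` becomes `|1⟩`: the win probability is `1` for
`a = b` and `sin² (π/3) = 3/4` otherwise.
-/

open scoped InnerProductSpace ComplexOrder
open Real

section InnerProduct

variable {E : Type*} [NormedAddCommGroup E] [InnerProductSpace ℝ E]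

lemma neg_add_inner_le_norm_sq_div_four {u : E} {t : ℝ} (h₀ : ‖u‖ ≤ t) (h₁ : ‖u‖ ≤ 2 - t)
    (w : E) : -t + ⟪u, w⟫_ℝ ≤ ‖w‖ ^ 2 / 4 := by
  nlinarith [real_inner_le_norm u w, sq_nonneg (‖w‖ / 2 - ‖u‖), norm_nonneg u, norm_nonneg w]

lemma sum_norm_two_smul_sub_sum_sq {ι : Type*} [Fintype ι] (v : ι → E) :
    ∑ i, ‖(2 : ℝ) • v i - ∑ j, v j‖ ^ 2
      = 4 * ∑ i, ‖v i‖ ^ 2 + (Fintype.card ι - 4) * ‖∑ j, v j‖ ^ 2 := by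
  simp only [norm_sub_sq_real, norm_smul, inner_smul_left, Finset.sum_add_distrib,
    Finset.sum_sub_distrib, ← Finset.mul_sum, ← sum_inner, Finset.sum_const, Finset.card_univ,
    real_inner_self_eq_norm_sq, mul_pow, nsmul_eq_mul]
  norm_num
  ring

end InnerProduct

lemma applyKraus_sub {n : ℕ} (K : Fin n → Matrix (Fin 2) (Fin 2) ℂ)
    (ρ σ : Matrix (Fin 2) (Fin 2) ℂ) :
    applyKraus K (ρ - σ) = applyKraus K ρ - applyKraus K σ := by
  simp only [applyKraus, mul_sub, sub_mul, Finset.sum_sub_distrib]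

lemma applyKraus_posSemidef {n : ℕ} (K : Fin n → Matrix (Fin 2) (Fin 2) ℂ)
    {ρ : Matrix (Fin 2) (Fin 2) ℂ} (hρ : ρ.PosSemidef) : (applyKraus K ρ).PosSemidef :=
  posSemidef_sum _ fun i _ ↦ hρ.mul_mul_conjTranspose_same (K i)

lemma trace_applyKraus {n : ℕ} {K : Fin n → Matrix (Fin 2) (Fin 2) ℂ}
    (hK : ∑ i, (K i)ᴴ * K i = 1) (ρ : Matrix (Fin 2) (Fin 2) ℂ) :
    (applyKraus K ρ).trace = ρ.trace := by
  simp only [applyKraus, trace_sum, trace_mul_cycle (K _)]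
  rw [← trace_sum, ← Finset.sum_mul, hK, one_mul]

lemma trace_mul_applyKraus {n : ℕ} (K : Fin n → Matrix (Fin 2) (Fin 2) ℂ)
    (X ρ : Matrix (Fin 2) (Fin 2) ℂ) :
    (X * applyKraus K ρ).trace = (applyKraus (fun i ↦ (K i)ᴴ) X * ρ).trace := by
  simp only [applyKraus, Finset.mul_sum, Finset.sum_mul, trace_sum, conjTranspose_conjTranspose]
  refine Finset.sum_congr rfl fun i _ ↦ ?_
  rw [← mul_assoc, ← mul_assoc, trace_mul_comm]
  simp only [mul_assoc]

noncomputable def krausEffect {n : ℕ} (K : Fin n → Matrix (Fin 2) (Fin 2) ℂ) (k : Fin 2) :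
    Matrix (Fin 2) (Fin 2) ℂ :=
  applyKraus (fun i ↦ (K i)ᴴ) (single k k 1)

lemma applyKraus_apply_self {n : ℕ} (K : Fin n → Matrix (Fin 2) (Fin 2) ℂ)
    (ρ : Matrix (Fin 2) (Fin 2) ℂ) (k : Fin 2) :
    applyKraus K ρ k k = (krausEffect K k * ρ).trace := by
  rw [krausEffect, ← trace_mul_applyKraus, trace_single_mul, one_smul]

lemma krausEffect_posSemidef {n : ℕ} (K : Fin n → Matrix (Fin 2) (Fin 2) ℂ) (k : Fin 2) :
    (krausEffect K k).PosSemidef := by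
  refine applyKraus_posSemidef _ ?_
  rw [← diagonal_single]
  exact PosSemidef.diagonal (Pi.single_nonneg.mpr zero_le_one)

lemma one_sub_krausEffect_one {n : ℕ} {K : Fin n → Matrix (Fin 2) (Fin 2) ℂ}
    (hK : ∑ i, (K i)ᴴ * K i = 1) : 1 - krausEffect K 1 = krausEffect K 0 := by
  have hone : applyKraus (fun i ↦ (K i)ᴴ) 1 = 1 := by simpa [applyKraus] using hK
  have hsingle : (1 : Matrix (Fin 2) (Fin 2) ℂ) - single 1 1 1 = single 0 0 1 := by
    rw [← sum_single_one, Fin.sum_univ_two, add_sub_cancel_right]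
  rw [krausEffect, krausEffect, ← hone, ← applyKraus_sub, hsingle]

lemma rho0_posSemidef : rho0.PosSemidef := by
  have : rho0 = diagonal ![1, 0] := by
    ext i j
    fin_cases i <;> fin_cases j <;> rfl
  rw [this]
  exact PosSemidef.diagonal fun i ↦ by fin_cases i <;> simp

lemma trace_rho0 : rho0.trace = 1 := by
  simp [rho0, trace_fin_two]

lemma Matrix.IsHermitian.im_apply_self {n : Type*} {M : Matrix n n ℂ} (hM : M.IsHermitian)
    (i : n) : (M i i).im = 0 := by
  have := congrArg Complex.im (hM.apply i i)
  simp only [RCLike.star_def, Complex.conj_im] at this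
  linarith

def blochVector (M : Matrix (Fin 2) (Fin 2) ℂ) : EuclideanSpace ℝ (Fin 3) :=
  !₂[2 * (M 0 1).re, 2 * (M 0 1).im, (M 0 0).re - (M 1 1).re]

lemma re_trace_mul_eq {A B : Matrix (Fin 2) (Fin 2) ℂ} (hA : A.IsHermitian)
    (hB : B.IsHermitian) :
    (A * B).trace.re = (A.trace.re * B.trace.re + ⟪blochVector A, blochVector B⟫_ℝ) / 2 := by
  have hA10 := hA.apply 1 0
  have hB10 := hB.apply 1 0
  simp only [trace_fin_two, mul_apply, Fin.sum_univ_two, blochVector, PiLp.inner_apply,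
    Fin.sum_univ_three] at *
  rw [← hA10, ← hB10]
  simp only [RCLike.star_def, Complex.add_re, Complex.mul_re, hA.im_apply_self, hB.im_apply_self,
    mul_zero, sub_zero, Complex.conj_re, Complex.conj_im, mul_neg, sub_neg_eq_add, neg_mul,
    cons_val_zero, RCLike.inner_apply, ringHom_apply, cons_val_one, cons_val]
  ring

lemma norm_blochVector_le {M : Matrix (Fin 2) (Fin 2) ℂ} (hM : M.PosSemidef) :
    ‖blochVector M‖ ≤ M.trace.re := by
  have hdet := hM.det_nonneg
  have h₀ := hM.diag_nonneg (i := 0)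
  have h₁ := hM.diag_nonneg (i := 1)
  rw [det_fin_two, ← hM.isHermitian.apply 1 0] at hdet
  rw [Complex.nonneg_iff] at hdet h₀ h₁
  simp only [Fin.isValue, RCLike.star_def, Complex.sub_re, Complex.mul_re, Complex.conj_re,
    Complex.conj_im, mul_neg, sub_neg_eq_add, sub_nonneg] at hdet
  have htr : 0 ≤ M.trace.re := by simp only [trace_fin_two, Complex.add_re]; linarith
  refine le_of_sq_le_sq ?_ htr
  rw [EuclideanSpace.norm_sq_eq]
  simp only [blochVector, norm_eq_abs, sq_abs, Fin.sum_univ_three, cons_val_zero, cons_val_one,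
    cons_val, trace_fin_two, Complex.add_re]
  nlinarith

lemma blochVector_one_sub (M : Matrix (Fin 2) (Fin 2) ℂ) :
    blochVector (1 - M) = -blochVector M := by
  ext i
  fin_cases i <;> simp [blochVector]

lemma sum_ite_re_trace_le {E : Matrix (Fin 2) (Fin 2) ℂ} (hE : E.PosSemidef)
    (hE' : (1 - E).PosSemidef) {ρ : Fin 3 → Matrix (Fin 2) (Fin 2) ℂ}
    (hρ : ∀ a, (ρ a).PosSemidef) (htr : ∀ a, (ρ a).trace = 1) (b : Fin 3) :
    ∑ a, (if a = b then (E * ρ a).trace else ((1 - E) * ρ a).trace).re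
      ≤ 2 + ‖(2 : ℝ) • blochVector (ρ b) - ∑ a, blochVector (ρ a)‖ ^ 2 / 8 := by
  set t := E.trace.re
  set u := blochVector E
  set v := fun a ↦ blochVector (ρ a)
  have htr' : (1 - E).trace.re = 2 - t := by simp [trace_sub, t]
  have hE₁ : ∀ a, (E * ρ a).trace.re = (t + ⟪u, v a⟫_ℝ) / 2 := fun a ↦ by
    rw [re_trace_mul_eq hE.1 (hρ a).1, htr a]
    simp [t, u, v]
  have hE₀ : ∀ a, ((1 - E) * ρ a).trace.re = (2 - t - ⟪u, v a⟫_ℝ) / 2 := fun a ↦ by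
    rw [re_trace_mul_eq hE'.1 (hρ a).1, htr a, htr', blochVector_one_sub, inner_neg_left]
    simp [u, v]
    ring
  have hsum : ∑ a, (if a = b then (E * ρ a).trace else ((1 - E) * ρ a).trace).re
      = 2 + (-t + ⟪u, (2 : ℝ) • v b - ∑ a, v a⟫_ℝ) / 2 := by
    simp only [apply_ite Complex.re, hE₁, hE₀]
    fin_cases b <;>
      simp [Fin.sum_univ_three, inner_sub_right, inner_add_right, real_inner_smul_right] <;> ring
  have hu : ‖u‖ ≤ 2 - t := by
    simpa [u, blochVector_one_sub, htr'] using norm_blochVector_le hE'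
  rw [hsum]
  linarith [neg_add_inner_le_norm_sq_div_four (norm_blochVector_le hE) hu
    ((2 : ℝ) • v b - ∑ a, v a)]

lemma winProb32_le {n m : ℕ}
    {KA : Fin 3 → Fin n → Matrix (Fin 2) (Fin 2) ℂ}
    {KB : Fin 3 → Fin m → Matrix (Fin 2) (Fin 2) ℂ}
    (hKA : ∀ a, ∑ i, (KA a i)ᴴ * KA a i = 1) (hKB : ∀ b, ∑ j, (KB b j)ᴴ * KB b j = 1) :
    winProb32 KA KB ≤ 5 / 6 := by
  set ρ := fun a ↦ applyKraus (KA a) rho0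
  set v := fun a ↦ blochVector (ρ a)
  have hρ : ∀ a, (ρ a).PosSemidef := fun a ↦ applyKraus_posSemidef _ rho0_posSemidef
  have htr : ∀ a, (ρ a).trace = 1 := fun a ↦ by simp [ρ, trace_applyKraus (hKA a), trace_rho0]
  have hv : ∀ a, ‖v a‖ ≤ 1 := fun a ↦ by simpa [htr] using norm_blochVector_le (hρ a)
  have hguess : ∀ b, ∑ a, (if a = b then applyKraus (KB b) (ρ a) 1 1
      else applyKraus (KB b) (ρ a) 0 0).re ≤ 2 + ‖(2 : ℝ) • v b - ∑ a, v a‖ ^ 2 / 8 := fun b ↦ by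
    have hE' := krausEffect_posSemidef (KB b) 0
    rw [← one_sub_krausEffect_one (hKB b)] at hE'
    simp only [applyKraus_apply_self, ← one_sub_krausEffect_one (hKB b)]
    exact sum_ite_re_trace_le (krausEffect_posSemidef _ 1) hE' hρ htr b
  have hbloch : ∑ b, ‖(2 : ℝ) • v b - ∑ a, v a‖ ^ 2 ≤ 12 := by
    rw [sum_norm_two_smul_sub_sum_sq]
    have hv2 : ∀ a, ‖v a‖ ^ 2 ≤ 1 := fun a ↦ pow_le_one₀ (norm_nonneg _) (hv a)
    simp only [Fin.sum_univ_three, Fintype.card_fin, Nat.cast_ofNat]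
    nlinarith [hv2 0, hv2 1, hv2 2, sq_nonneg ‖∑ a, v a‖]
  calc winProb32 KA KB
      = (∑ b, ∑ a, (if a = b then applyKraus (KB b) (ρ a) 1 1
          else applyKraus (KB b) (ρ a) 0 0).re) / 9 := by rw [winProb32, Finset.sum_comm]
    _ ≤ (∑ b : Fin 3, (2 + ‖(2 : ℝ) • v b - ∑ a, v a‖ ^ 2 / 8)) / 9 := by
      gcongr with b
      exact hguess b
    _ ≤ 5 / 6 := by
      rw [Finset.sum_add_distrib, ← Finset.sum_div]
      simp only [Finset.sum_const, Finset.card_univ, Fintype.card_fin, nsmul_eq_mul]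
      linarith

noncomputable def rot (θ : ℝ) : Matrix (Fin 2) (Fin 2) ℂ :=
  !![(cos θ : ℂ), -(sin θ : ℂ); (sin θ : ℂ), (cos θ : ℂ)]

lemma rot_conjTranspose_mul_self (θ : ℝ) : (rot θ)ᴴ * rot θ = 1 := by
  have h : (cos θ : ℂ) ^ 2 + (sin θ : ℂ) ^ 2 = 1 := by exact_mod_cast cos_sq_add_sin_sq θ
  ext i j
  fin_cases i <;> fin_cases j <;>
    simp [rot, mul_apply, Fin.sum_univ_two, -Complex.ofReal_cos, -Complex.ofReal_sin, ← sq, h,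
      mul_comm, add_comm]

lemma rot_mul_rot (φ θ : ℝ) : rot φ * rot θ = rot (φ + θ) := by
  ext i j
  fin_cases i <;> fin_cases j <;>
    simp [rot, mul_apply, Fin.sum_univ_two, cos_add, sin_add] <;> ring

lemma applyKraus_fin_one (M ρ : Matrix (Fin 2) (Fin 2) ℂ) :
    applyKraus (fun _ : Fin 1 ↦ M) ρ = M * ρ * Mᴴ := by
  simp [applyKraus]

lemma rot_mul_rho0_mul_conjTranspose (θ : ℝ) :
    rot θ * rho0 * (rot θ)ᴴ = !![((cos θ ^ 2 : ℝ) : ℂ), ((cos θ * sin θ : ℝ) : ℂ);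
      ((sin θ * cos θ : ℝ) : ℂ), ((sin θ ^ 2 : ℝ) : ℂ)] := by
  ext i j
  fin_cases i <;> fin_cases j <;>
    simp [rot, rho0, mul_apply, Fin.sum_univ_two, -Complex.ofReal_cos, -Complex.ofReal_sin] <;>
    ring

lemma applyKraus_rot_rot_rho0 (φ θ : ℝ) :
    applyKraus (fun _ : Fin 1 ↦ rot φ) (applyKraus (fun _ : Fin 1 ↦ rot θ) rho0)
      = rot (φ + θ) * rho0 * (rot (φ + θ))ᴴ := by
  simp only [applyKraus_fin_one, ← rot_mul_rot, conjTranspose_mul, mul_assoc]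

noncomputable def aliceAngle : Fin 3 → ℝ := ![0, π / 3, 2 * π / 3]

lemma sin_aliceAngle_sub_sq {a b : Fin 3} (h : a ≠ b) :
    sin (aliceAngle b - aliceAngle a) ^ 2 = 3 / 4 := by
  have h₁ : sin (π / 3) ^ 2 = 3 / 4 := by
    rw [sin_pi_div_three, div_pow, sq_sqrt (by norm_num : (0:ℝ) ≤ 3)]; norm_num
  have h₂ : sin (2 * π / 3) ^ 2 = 3 / 4 := by
    rw [show 2 * π / 3 = π - π / 3 by ring, sin_pi_sub, h₁]
  have h₃ : 2 * π / 3 - π / 3 = π / 3 := by ring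
  have h₄ : π / 3 - 2 * π / 3 = -(π / 3) := by ring
  fin_cases a <;> fin_cases b <;> simp_all [aliceAngle, -sin_pi_div_three]

noncomputable def rotAlice (a : Fin 3) : Fin 1 → Matrix (Fin 2) (Fin 2) ℂ :=
  fun _ ↦ rot (aliceAngle a)

noncomputable def rotBob (b : Fin 3) : Fin 1 → Matrix (Fin 2) (Fin 2) ℂ :=
  fun _ ↦ rot (π / 2 - aliceAngle b)

lemma winProb32_rotAlice_rotBob : winProb32 rotAlice rotBob = 5 / 6 := by
  have hstate : ∀ a b, applyKraus (rotBob b) (applyKraus (rotAlice a) rho0)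
      = rot (π / 2 - (aliceAngle b - aliceAngle a)) * rho0
          * (rot (π / 2 - (aliceAngle b - aliceAngle a)))ᴴ := fun a b ↦ by
    unfold rotBob rotAlice
    rw [applyKraus_rot_rot_rho0,
      show π / 2 - aliceAngle b + aliceAngle a = π / 2 - (aliceAngle b - aliceAngle a) by ring]
  have hterm : ∀ a b, (if a = b then (applyKraus (rotBob b) (applyKraus (rotAlice a) rho0)) 1 1
      else (applyKraus (rotBob b) (applyKraus (rotAlice a) rho0)) 0 0).re
      = if a = b then 1 else 3 / 4 := fun a b ↦ by
    rw [hstate, rot_mul_rho0_mul_conjTranspose, cos_pi_div_two_sub, sin_pi_div_two_sub]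
    split_ifs with h
    · simp [h]
    · simp [sin_aliceAngle_sub_sq h]
  simp only [winProb32, hterm]
  simp only [Fin.sum_univ_three, ↓reduceIte, zero_ne_one, one_ne_zero, Fin.reduceEq]
  norm_num

/-- The optimal quantum (even irreversible) win rate of the 32-Game is exactly
5/6: no quantum-channel strategy exceeds 5/6, and 5/6 is attained. -/
theorem stmt_12 :
    IsGreatest
      {p : ℝ | ∃ (n m : ℕ)
          (KA : Fin 3 → Fin n → Matrix (Fin 2) (Fin 2) ℂ)
          (KB : Fin 3 → Fin m → Matrix (Fin 2) (Fin 2) ℂ),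
        (∀ a, ∑ i, (KA a i)ᴴ * KA a i = 1) ∧
        (∀ b, ∑ j, (KB b j)ᴴ * KB b j = 1) ∧
        p = winProb32 KA KB}
      (5 / 6) := by
  refine ⟨⟨1, 1, rotAlice, rotBob, ?_, ?_, winProb32_rotAlice_rotBob.symm⟩, ?_⟩
  · simp [rotAlice, rot_conjTranspose_mul_self]
  · simp [rotBob, rot_conjTranspose_mul_self]
  · rintro p ⟨n, m, KA, KB, hKA, hKB, rfl⟩
    exact winProb32_le hKA hKB
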